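/- Precise delivery: under the credit protocol, a signal s emitted by n1 is consumed by n2 exactly when n2 has consumed all data items that n1 emitted prior to emitting s, and no data item emitted after s. That is, if the interleaved emission sequence of the sender is a list over {data, signal}, then for every reachable execution of the protocol, the interleaved consumption sequence of the receiver is a prefix of the sender's emission sequence (data items and signals are received in exactly the order they were emitted, interleaved). -/

import Mathlib

/-!
The events emitted but not yet consumed are the first `c` queued data items followed by the
contents of the two queues read in delivery order, where each queued signal sits behind as many
queued data items as its credit. This decomposition `emitted = consumed ++ pending` is preserved
by every step, thanks to the bookkeeping fact that while signals are queued, the length of `Q`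
is `c` plus the total queued credit plus the number of data items emitted since the last signal.
-/

/-- Events exchanged between two streaming nodes: data items or signals. -/
inductive Ev
  | data (v : ℕ)
  | sig (id : ℕ)
deriving DecidableEq

/-- Full channel state between sender and receiver.
`emitted` is the sender's interleaved emission sequence,
`consumed` is the receiver's interleaved consumption sequence,
`Q` is the FIFO data queue, `S` the FIFO signal queue (with credits),
`c` the receiver's credit counter, `k` the number of data items emitted
since the sender's last signal. -/
structure CState where
  emitted : List Ev
  consumed : List Ev
  Q : List ℕ
  S : List (ℕ × ℕ)
  c : ℕ
  k : ℕ

/-- Transitions of the credit protocol with explicit FIFO queues. -/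
inductive CStep : CState → CState → Prop
  | emitData (s : CState) (v : ℕ) :
      CStep s { s with emitted := s.emitted ++ [.data v],
                       Q := s.Q ++ [v], k := s.k + 1 }
  | emitSignal (s : CState) (i : ℕ) :
      CStep s { s with emitted := s.emitted ++ [.sig i],
                       S := s.S ++ [(i, if s.S = [] then s.Q.length else s.k)],
                       k := 0 }
  | consumeData (s : CState) (v : ℕ) (Q' : List ℕ)
      (hQ : s.Q = v :: Q') (h : s.S = [] ∨ 0 < s.c) :
      CStep s { s with consumed := s.consumed ++ [.data v], Q := Q',
                       c := if s.S = [] then s.c else s.c - 1 }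
  | transfer (s : CState) (i h : ℕ) (S' : List (ℕ × ℕ))
      (hS : s.S = (i, h) :: S') (hc : s.c = 0) (hh : 0 < h) :
      CStep s { s with S := (i, 0) :: S', c := h }
  | consumeSignal (s : CState) (i : ℕ) (S' : List (ℕ × ℕ))
      (hS : s.S = (i, 0) :: S') (hc : s.c = 0) :
      CStep s { s with consumed := s.consumed ++ [.sig i], S := S' }

/-- Initial state: nothing emitted, nothing consumed, empty queues. -/
def initC : CState := ⟨[], [], [], [], 0, 0⟩

def credits (S : List (ℕ × ℕ)) : ℕ := (S.map Prod.snd).sum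

@[simp] lemma credits_nil : credits [] = 0 := rfl

@[simp] lemma credits_cons (p : ℕ × ℕ) (S : List (ℕ × ℕ)) :
    credits (p :: S) = p.2 + credits S := by
  simp [credits]

@[simp] lemma credits_append (S T : List (ℕ × ℕ)) :
    credits (S ++ T) = credits S + credits T := by
  simp [credits]

/-- A queued signal `(i, h)` is delivered right after the next `h` queued data items. -/
def inTransit : List ℕ → List (ℕ × ℕ) → List Ev
  | Q, [] => Q.map .data
  | Q, (i, h) :: S => (Q.take h).map .data ++ .sig i :: inTransit (Q.drop h) S

lemma inTransit_append_data (Q : List ℕ) (v : ℕ) (S : List (ℕ × ℕ))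
    (hS : credits S ≤ Q.length) :
    inTransit (Q ++ [v]) S = inTransit Q S ++ [.data v] := by
  induction S generalizing Q with
  | nil => simp [inTransit]
  | cons p S ih =>
    obtain ⟨i, h⟩ := p
    rw [credits_cons] at hS
    have hh : h ≤ Q.length := by omega
    have hrest : credits S ≤ (Q.drop h).length := by rw [List.length_drop]; omega
    rw [inTransit, inTransit, List.take_append_of_le_length hh,
      List.drop_append_of_le_length hh, ih _ hrest]
    simp

lemma inTransit_append_sig (Q : List ℕ) (S : List (ℕ × ℕ)) (i k : ℕ)
    (hQ : Q.length = credits S + k) :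
    inTransit Q (S ++ [(i, k)]) = inTransit Q S ++ [.sig i] := by
  induction S generalizing Q with
  | nil =>
    rw [credits_nil, zero_add] at hQ
    simp [inTransit, ← hQ]
  | cons p S ih =>
    obtain ⟨j, h⟩ := p
    rw [credits_cons] at hQ
    have hrest : (Q.drop h).length = credits S + k := by rw [List.length_drop]; omega
    rw [List.cons_append, inTransit, inTransit, ih _ hrest]
    simp

namespace CState

structure Inv (s : CState) : Prop where
  emitted_eq :
    s.emitted = s.consumed ++ (s.Q.take s.c).map .data ++ inTransit (s.Q.drop s.c) s.S
  c_eq_zero : s.S = [] → s.c = 0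
  length_Q : s.S ≠ [] → s.Q.length = s.c + credits s.S + s.k

lemma inv_initC : initC.Inv := ⟨rfl, fun _ => rfl, fun h => absurd rfl h⟩

lemma Inv.c_le_length {s : CState} (hs : s.Inv) : s.c ≤ s.Q.length := by
  by_cases hS : s.S = []
  · simp [hs.c_eq_zero hS]
  · have := hs.length_Q hS; omega

lemma Inv.credits_le_length {s : CState} (hs : s.Inv) :
    credits s.S ≤ (s.Q.drop s.c).length := by
  by_cases hS : s.S = []
  · simp [hS]
  · have := hs.length_Q hS; rw [List.length_drop]; omega

lemma Inv.step {s t : CState} (hs : s.Inv) (hst : CStep s t) : t.Inv := by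
  have he := hs.emitted_eq
  cases hst with
  | emitData v =>
    refine ⟨?_, hs.c_eq_zero, fun hS => ?_⟩
    · have hcQ := hs.c_le_length
      simp only [he, List.take_append_of_le_length hcQ, List.drop_append_of_le_length hcQ,
        inTransit_append_data _ _ _ hs.credits_le_length]
      simp
    · have := hs.length_Q hS
      simp only [List.length_append, List.length_cons, List.length_nil, zero_add]; omega
  | emitSignal i =>
    by_cases hS : s.S = []
    · have hc0 := hs.c_eq_zero hS
      refine ⟨?_, by simp, fun _ => by simp [hS, hc0]⟩
      simp [he, hS, hc0, inTransit]
    · have hQ := hs.length_Q hS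
      refine ⟨?_, by simp, fun _ => ?_⟩
      · simp only [if_neg hS]
        rw [inTransit_append_sig _ _ _ _ (by rw [List.length_drop]; omega)]
        simp [he]
      · simp only [if_neg hS, credits_append, credits_cons, credits_nil, add_zero]; omega
  | consumeData v Q' hQ hcons =>
    by_cases hS : s.S = []
    · have hc0 := hs.c_eq_zero hS
      refine ⟨?_, fun _ => by simp [hS, hc0], fun h => absurd hS h⟩
      simp [he, hQ, hS, hc0, inTransit]
    · obtain ⟨c', hc'⟩ : ∃ c', s.c = c' + 1 :=
        Nat.exists_eq_add_one.mpr (hcons.resolve_left hS)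
      have hQlen := hs.length_Q hS
      rw [hQ, List.length_cons] at hQlen
      refine ⟨?_, fun h => absurd h hS, fun _ => by simp only [if_neg hS]; omega⟩
      simp [he, hQ, hS, hc']
  | transfer i h S' hS hc0 _ =>
    have hQ := hs.length_Q (by simp [hS])
    refine ⟨?_, by simp, fun _ => by simp only [hS, credits_cons, zero_add] at hQ ⊢; omega⟩
    simp [he, hS, hc0, inTransit]
  | consumeSignal i S' hS hc0 =>
    have hQ := hs.length_Q (by simp [hS])
    refine ⟨?_, fun _ => hc0, fun _ => ?_⟩
    · simp [he, hS, hc0, inTransit]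
    · simp only [hS, credits_cons, zero_add] at hQ ⊢; omega

end CState

/-- precise delivery: in every reachable state of the credit
protocol, the receiver's interleaved consumption sequence is a prefix of the
sender's interleaved emission sequence; in particular each signal is received
exactly after all data emitted before it and before any data emitted after it. -/
theorem precise_delivery (s : CState)
    (hreach : Relation.ReflTransGen CStep initC s) :
    s.consumed <+: s.emitted := by
  have hinv : s.Inv := by
    induction hreach with
    | refl => exact CState.inv_initC
    | tail _ hst ih => exact ih.step hst
  rw [hinv.emitted_eq, List.append_assoc]
  exact List.prefix_append _ _
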